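/- Fix w ∈ ℝⁿ and β ∈ (0,1), and suppose L(w,·) is measurable and μ-integrable and Φ(w,·) is continuous. Then VaR_β(w) attains the minimum of F_β(w,·); that is, F_β(w, VaR_β(w)) = VaR_β(w) + (1−β)⁻¹ ∫ max(L(w,r) − VaR_β(w), 0) dμ(r) = CVaR_β(w). -/

import Mathlib

/-!
Write `g = L w`. Integrating `max (g - α) 0 ≥ (g - α) · 1{v ≤ g}` gives the subgradient inequality
`∫ (g - α)⁺ ≥ ∫ (g - v)⁺ + (v - α) μ{v ≤ g}`, so `v` minimises `F_β` as soon as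
`μ{v ≤ g} = 1 - β`, and then `F_β(v) = (1 - β)⁻¹ ∫_{v ≤ g} g`. Continuity of the distribution
function `Φ` is what gives `μ{v ≤ g} = 1 - β` at `v = VaR_β`: it forces `Φ v = β` and leaves no
atom at `v`.
-/

open MeasureTheory ProbabilityTheory Filter Set Topology

lemma Continuous.apply_csInf_setOf_le_eq {f : ℝ → ℝ} (hf : Continuous f) {β : ℝ}
    (hne : {a | β ≤ f a}.Nonempty) (hbdd : BddBelow {a | β ≤ f a}) :
    f (sInf {a | β ≤ f a}) = β := by
  set S := {a | β ≤ f a}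
  have hmem : sInf S ∈ S := (isClosed_le continuous_const hf).csInf_mem hne hbdd
  refine le_antisymm (le_of_tendsto (x := 𝓝[<] sInf S)
    (hf.continuousAt.tendsto.mono_left nhdsWithin_le_nhds) ?_) hmem
  filter_upwards [self_mem_nhdsWithin] with a ha
  have ha' : a ∉ S := notMem_of_lt_csInf ha hbdd
  exact (not_le.1 ha').le

namespace ProbabilityTheory

lemma cdf_csInf_setOf_le_eq {ν : Measure ℝ} {β : ℝ} (hβ : β ∈ Ioo 0 1)
    (hcont : Continuous (cdf ν)) :
    cdf ν (sInf {a | β ≤ cdf ν a}) = β := by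
  refine hcont.apply_csInf_setOf_le_eq ?_ ?_
  · obtain ⟨a, ha⟩ := ((tendsto_cdf_atTop ν).eventually (eventually_gt_nhds hβ.2)).exists
    exact ⟨a, ha.le⟩
  · obtain ⟨a, ha⟩ := ((tendsto_cdf_atBot ν).eventually (eventually_lt_nhds hβ.1)).exists
    refine ⟨a, fun b hb => le_of_not_gt fun hba => ?_⟩
    exact (ha.trans_le' (monotone_cdf ν hba.le)).not_ge hb

lemma measure_Ici_of_continuousAt_cdf {ν : Measure ℝ} [IsProbabilityMeasure ν] {x : ℝ}
    (hx : ContinuousAt (cdf ν) x) :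
    ν (Ici x) = ENNReal.ofReal (1 - cdf ν x) := by
  conv_lhs => rw [← measure_cdf ν]
  rw [StieltjesFunction.measure_Ici _ (tendsto_cdf_atTop ν),
    (monotone_cdf ν).continuousWithinAt_Iio_iff_leftLim_eq.1 hx.continuousWithinAt]

end ProbabilityTheory

section RockafellarUryasev

variable {Ω : Type*} [MeasurableSpace Ω] {μ : Measure Ω} [IsFiniteMeasure μ] {g : Ω → ℝ}

/-- The paper's `F_β(w, α)`, with `g = L(w, ·)`. -/
noncomputable def cvarObjective (μ : Measure Ω) (g : Ω → ℝ) (β α : ℝ) : ℝ :=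
  α + (1 - β)⁻¹ * ∫ ω, max (g ω - α) 0 ∂μ

lemma MeasureTheory.Integrable.max_sub_const_zero (hg : Integrable g μ) (t : ℝ) :
    Integrable (fun ω => max (g ω - t) 0) μ :=
  (hg.sub (integrable_const t)).sup (integrable_zero _ _ μ)

lemma integral_max_sub_const_zero (hg : Integrable g μ) (v : ℝ) :
    ∫ ω, max (g ω - v) 0 ∂μ = ∫ ω in {ω | v ≤ g ω}, g ω ∂μ - v * μ.real {ω | v ≤ g ω} := by
  have hind : (fun ω => max (g ω - v) 0) = {ω | v ≤ g ω}.indicator (fun ω => g ω - v) := by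
    funext ω
    by_cases h : v ≤ g ω
    · simp [h]
    · simp [h, (not_le.1 h).le]
  rw [hind, integral_indicator₀ (nullMeasurableSet_le aemeasurable_const hg.aemeasurable),
    integral_sub hg.integrableOn (integrableOn_const (measure_ne_top μ _)), setIntegral_const,
    smul_eq_mul, mul_comm]

lemma sub_mul_measureReal_add_integral_le (hg : Integrable g μ) (v α : ℝ) :
    (v - α) * μ.real {ω | v ≤ g ω} + ∫ ω, max (g ω - v) 0 ∂μ ≤ ∫ ω, max (g ω - α) 0 ∂μ :=
  calc (v - α) * μ.real {ω | v ≤ g ω} + ∫ ω, max (g ω - v) 0 ∂μ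
      = ∫ ω in {ω | v ≤ g ω}, (g ω - α) ∂μ := by
        rw [integral_max_sub_const_zero hg, integral_sub hg.integrableOn
          (integrableOn_const (measure_ne_top μ _)), setIntegral_const, smul_eq_mul]
        ring
    _ ≤ ∫ ω in {ω | v ≤ g ω}, max (g ω - α) 0 ∂μ :=
        setIntegral_mono (hg.sub (integrable_const α)).integrableOn
          (hg.max_sub_const_zero α).integrableOn fun ω => le_max_left _ _
    _ ≤ ∫ ω, max (g ω - α) 0 ∂μ :=
        setIntegral_le_integral (hg.max_sub_const_zero α) (ae_of_all _ fun ω => le_max_right _ _)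

variable {β v : ℝ}

lemma cvarObjective_le (hg : Integrable g μ) (hβ : β < 1)
    (htail : μ.real {ω | v ≤ g ω} = 1 - β) (α : ℝ) :
    cvarObjective μ g β v ≤ cvarObjective μ g β α := by
  have hβ' : 0 < 1 - β := sub_pos.2 hβ
  have key := sub_mul_measureReal_add_integral_le hg v α
  rw [htail] at key
  calc cvarObjective μ g β v
      = α + (1 - β)⁻¹ * ((v - α) * (1 - β) + ∫ ω, max (g ω - v) 0 ∂μ) := by
        rw [cvarObjective]
        field_simp
        ring
    _ ≤ cvarObjective μ g β α := by
        rw [cvarObjective]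
        gcongr

lemma cvarObjective_eq_setIntegral (hg : Integrable g μ) (hβ : β < 1)
    (htail : μ.real {ω | v ≤ g ω} = 1 - β) :
    cvarObjective μ g β v = (1 - β)⁻¹ * ∫ ω in {ω | v ≤ g ω}, g ω ∂μ := by
  have hβ' : 1 - β ≠ 0 := (sub_pos.2 hβ).ne'
  rw [cvarObjective, integral_max_sub_const_zero hg, htail]
  field_simp
  ring

end RockafellarUryasev

theorem stmt_5_general {n : ℕ} (μ : Measure (Fin n → ℝ)) [IsProbabilityMeasure μ]
    (L : (Fin n → ℝ) → (Fin n → ℝ) → ℝ) (w : Fin n → ℝ) (β : ℝ)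
    (hβ : β ∈ Set.Ioo (0 : ℝ) 1)
    (hint : Integrable (L w) μ)
    (hcont : Continuous (fun α : ℝ => (μ {r | L w r ≤ α}).toReal))
    (v : ℝ) (hv : v = sInf {a : ℝ | β ≤ (μ {r | L w r ≤ a}).toReal}) :
    (∀ α : ℝ,
      v + (1 - β)⁻¹ * ∫ r, max (L w r - v) 0 ∂μ
        ≤ α + (1 - β)⁻¹ * ∫ r, max (L w r - α) 0 ∂μ) ∧
    v + (1 - β)⁻¹ * ∫ r, max (L w r - v) 0 ∂μ
      = (1 - β)⁻¹ * ∫ r in {r | v ≤ L w r}, L w r ∂μ := by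
  have hL : AEMeasurable (L w) μ := hint.aemeasurable
  set ν := μ.map (L w)
  have : IsProbabilityMeasure ν := Measure.isProbabilityMeasure_map hL
  have hcdf : cdf ν = fun a => (μ {r | L w r ≤ a}).toReal := funext fun a => by
    rw [cdf_eq_real, measureReal_def, Measure.map_apply_of_aemeasurable hL measurableSet_Iic]
    rfl
  rw [← hcdf] at hcont
  have hquantile : cdf ν v = β := by
    simpa only [hcdf, ← hv] using cdf_csInf_setOf_le_eq hβ hcont
  have htail : μ.real {r | v ≤ L w r} = 1 - β := by
    change (μ (L w ⁻¹' Ici v)).toReal = 1 - β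
    rw [← Measure.map_apply_of_aemeasurable hL measurableSet_Ici,
      measure_Ici_of_continuousAt_cdf hcont.continuousAt, hquantile,
      ENNReal.toReal_ofReal (sub_nonneg.2 hβ.2.le)]
  exact ⟨cvarObjective_le hint hβ.2 htail, cvarObjective_eq_setIntegral hint hβ.2 htail⟩

/-- For fixed `w` and `β ∈ (0,1)`, with `L w` measurable and integrable and
`Φ(w,·)` continuous, `VaR_β(w) = min {α | Φ(w,α) ≥ β}` (expressed as `sInf`) attains the
minimum of `F_β(w,·)`, and `F_β(w, VaR_β(w)) = CVaR_β(w)`. -/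
theorem stmt_5 {n : ℕ} (μ : Measure (Fin n → ℝ)) [IsProbabilityMeasure μ]
    (L : (Fin n → ℝ) → (Fin n → ℝ) → ℝ) (w : Fin n → ℝ) (β : ℝ)
    (hβ : β ∈ Set.Ioo (0 : ℝ) 1)
    (hmeas : Measurable (L w)) (hint : Integrable (L w) μ)
    (hcont : Continuous (fun α : ℝ => (μ {r | L w r ≤ α}).toReal))
    (v : ℝ) (hv : v = sInf {a : ℝ | β ≤ (μ {r | L w r ≤ a}).toReal}) :
    (∀ α : ℝ,
      v + (1 - β)⁻¹ * ∫ r, max (L w r - v) 0 ∂μ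
        ≤ α + (1 - β)⁻¹ * ∫ r, max (L w r - α) 0 ∂μ) ∧
    v + (1 - β)⁻¹ * ∫ r, max (L w r - v) 0 ∂μ
      = (1 - β)⁻¹ * ∫ r in {r | v ≤ L w r}, L w r ∂μ :=
  stmt_5_general μ L w β hβ hint hcont v hv
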